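/- arXiv:2309.04095 — 3 statements merged into one kernel-verified Lean document; each statement's English description precedes it below -/
import Mathlib

section
/- Let E be a nontrivial finite-dimensional complex inner product space and let U : E → E be an invertible (bijective) linear map. Define the manually-normalized time-evolution map f : E → E by f(ψ) = (‖ψ‖ / ‖U ψ‖) • U ψ for ψ ≠ 0 and f(0) = 0. Then f is additive (f(ψ + φ) = f(ψ) + f(φ) for all ψ, φ ∈ E) if and only if there exists c > 0 such that ‖U ψ‖ = c · ‖ψ‖ for all ψ ∈ E. In particular, unless U is proportional to a unitary operator, the manually-normalized evolution map is nonlinear. -/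
open scoped InnerProductSpace Classical

/-- Let `U` be an invertible linear map on a nontrivial
finite-dimensional complex inner product space, and let
`f ψ = (‖ψ‖ / ‖U ψ‖) • U ψ` for `ψ ≠ 0`, `f 0 = 0` be the manually-normalized
time-evolution map. Then `f` is additive if and only if `U` scales all norms
by a single constant `c > 0` (i.e. `U` is proportional to a unitary). -/
theorem manual_normalization_additive_iff_norm_scaling
    {E : Type*} [NormedAddCommGroup E] [InnerProductSpace ℂ E]
    [FiniteDimensional ℂ E] [Nontrivial E]
    (U : E →ₗ[ℂ] E) (hU : Function.Bijective U)
    (f : E → E)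
    (hf : ∀ ψ : E, f ψ = if ψ = 0 then 0 else ((‖ψ‖ / ‖U ψ‖ : ℝ)) • U ψ) :
    (∀ ψ φ : E, f (ψ + φ) = f ψ + f φ) ↔
      ∃ c : ℝ, 0 < c ∧ ∀ ψ : E, ‖U ψ‖ = c * ‖ψ‖ := by
  have hUinj := hU.injective
  have hUne : ∀ x : E, x ≠ 0 → U x ≠ 0 := by
    intro x hx h
    exact hx (hUinj (by simpa using h))
  constructor
  · intro hadd
    obtain ⟨ψ₀, hψ₀⟩ := exists_ne (0 : E)
    have hψ₀n : ‖ψ₀‖ ≠ 0 := norm_ne_zero_iff.mpr hψ₀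
    have hUψ₀n : ‖U ψ₀‖ ≠ 0 := norm_ne_zero_iff.mpr (hUne _ hψ₀)
    refine ⟨‖U ψ₀‖ / ‖ψ₀‖, div_pos (norm_pos_iff.mpr (hUne _ hψ₀))
      (norm_pos_iff.mpr hψ₀), fun ψ => ?_⟩
    by_cases h0 : ψ = 0
    · simp [h0]
    by_cases hdep : ∃ a : ℂ, ψ = a • ψ₀
    · obtain ⟨a, rfl⟩ := hdep
      rw [map_smul, norm_smul, norm_smul]
      field_simp
    · have hψn : ‖ψ‖ ≠ 0 := norm_ne_zero_iff.mpr h0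
      have hUψn : ‖U ψ‖ ≠ 0 := norm_ne_zero_iff.mpr (hUne _ h0)
      have hsum : ψ + ψ₀ ≠ 0 := by
        intro h
        exact hdep ⟨-1, by
          rw [neg_smul, one_smul, eq_neg_of_add_eq_zero_left h]⟩
      have key := hadd ψ ψ₀
      rw [hf, hf, hf, if_neg hsum, if_neg h0, if_neg hψ₀] at key
      set r : ℝ := ‖ψ + ψ₀‖ / ‖U (ψ + ψ₀)‖ with hr
      set s : ℝ := ‖ψ‖ / ‖U ψ‖ with hs
      set t : ℝ := ‖ψ₀‖ / ‖U ψ₀‖ with ht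
      rw [map_add, smul_add] at key
      have hrel : (r - s) • ψ + (r - t) • ψ₀ = 0 := by
        apply hUinj
        rw [map_add, LinearMap.map_smul_of_tower, LinearMap.map_smul_of_tower, map_zero]
        have h1 : (r - s) • U ψ + (r - t) • U ψ₀
            = (r • U ψ + r • U ψ₀) - (s • U ψ + t • U ψ₀) := by
          rw [sub_smul, sub_smul]; abel
        rw [h1, key, sub_self]
      have hrs : r = s := by
        by_contra hne
        have hne' : r - s ≠ 0 := sub_ne_zero.mpr hne
        apply hdep
        refine ⟨(((r - s)⁻¹ * (t - r) : ℝ) : ℂ), ?_⟩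
        have h2 : (r - s) • ψ = (t - r) • ψ₀ := by
          have h3 : (r - s) • ψ = -((r - t) • ψ₀) := by
            rw [eq_neg_of_add_eq_zero_left hrel]
          rw [h3, ← neg_smul]
          congr 1
          ring
        have h4 : ψ = ((r - s)⁻¹ * (t - r)) • ψ₀ := by
          rw [← smul_smul, ← h2, smul_smul, inv_mul_cancel₀ hne', one_smul]
        rw [h4, Complex.coe_smul]
      have hrt : r = t := by
        rw [hrs, sub_self, zero_smul, zero_add, smul_eq_zero] at hrel
        rcases hrel with h | h
        · have : r = t := by linarith [sub_eq_zero.mp (by linarith [h] : r - t = 0)]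
          exact this
        · exact absurd h hψ₀
      have hst : s = t := hrs ▸ hrt
      rw [hs, ht] at hst
      field_simp at hst ⊢
      linarith [hst]
  · rintro ⟨c, hc, hnorm⟩
    have hfe : ∀ ψ : E, f ψ = (c⁻¹ : ℝ) • U ψ := by
      intro ψ
      rw [hf]
      split_ifs with h
      · simp [h]
      · have hψn : ‖ψ‖ ≠ 0 := norm_ne_zero_iff.mpr h
        rw [hnorm ψ]
        congr 1
        field_simp
    intro ψ φ
    simp [hfe, map_add, smul_add]
end

section
/- Let ε be a real number with 0 < ε. In the two-qubit Hilbert space ℂ² ⊗ ℂ², modeled as the Euclidean space of functions (Fin 2 × Fin 2) → ℂ, let ψ_f be the vector with components ψ_f(0,0) = 1, ψ_f(1,1) = ε, and ψ_f(0,1) = ψ_f(1,0) = 0 (the Bell state |00⟩ + |11⟩ after Alice applies the non-unitary gate diag(1, ε) to her qubit). Then Bob's manually-normalized probabilities of measuring his qubit (the second index) to be 0 or 1 are: (∑_{i} |ψ_f(i,0)|²) / ‖ψ_f‖² = 1/(1+ε²) and (∑_{i} |ψ_f(i,1)|²) / ‖ψ_f‖² = ε²/(1+ε²). -/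
/-- Bob's unnormalized probability of outcome `j` on the second qubit. -/
def marginalNormSq {𝕜 ι κ : Type*} [RCLike 𝕜] [Fintype ι]
    (ψ : EuclideanSpace 𝕜 (ι × κ)) (j : κ) : ℝ :=
  ∑ i, ‖ψ (i, j)‖ ^ 2

theorem norm_sq_eq_sum_marginalNormSq {𝕜 ι κ : Type*} [RCLike 𝕜] [Fintype ι] [Fintype κ]
    (ψ : EuclideanSpace 𝕜 (ι × κ)) : ‖ψ‖ ^ 2 = ∑ j, marginalNormSq ψ j := by
  rw [EuclideanSpace.norm_sq_eq, Fintype.sum_prod_type_right]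
  rfl

theorem manual_normalization_ftl_signalling_probabilities_general
    (ε : ℝ)
    (ψf : EuclideanSpace ℂ (Fin 2 × Fin 2))
    (h00 : ψf (0, 0) = 1) (h11 : ψf (1, 1) = (ε : ℂ))
    (h01 : ψf (0, 1) = 0) (h10 : ψf (1, 0) = 0) :
    (∑ i : Fin 2, ‖ψf (i, 0)‖ ^ 2) / ‖ψf‖ ^ 2 = 1 / (1 + ε ^ 2) ∧
      (∑ i : Fin 2, ‖ψf (i, 1)‖ ^ 2) / ‖ψf‖ ^ 2 = ε ^ 2 / (1 + ε ^ 2) := by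
  have bob0 : marginalNormSq ψf 0 = 1 := by
    simp [marginalNormSq, Fin.sum_univ_two, h00, h10]
  have bob1 : marginalNormSq ψf 1 = ε ^ 2 := by
    simp [marginalNormSq, Fin.sum_univ_two, h01, h11]
  have total : ‖ψf‖ ^ 2 = 1 + ε ^ 2 := by
    rw [norm_sq_eq_sum_marginalNormSq, Fin.sum_univ_two, bob0, bob1]
  change marginalNormSq ψf 0 / _ = _ ∧ marginalNormSq ψf 1 / _ = _
  rw [bob0, bob1, total]
  exact ⟨rfl, rfl⟩

/-- In the two-qubit space `EuclideanSpace ℂ (Fin 2 × Fin 2)`,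
let `ψf = |00⟩ + ε|11⟩` (with `ε > 0`) be the Bell state after Alice applies
the non-unitary gate `diag(1, ε)` to her qubit. Under global manual
normalization, Bob's probabilities of measuring `0` and `1` on his qubit
(the second index) are `1/(1+ε²)` and `ε²/(1+ε²)` respectively. -/
theorem manual_normalization_ftl_signalling_probabilities
    (ε : ℝ) (hε : 0 < ε)
    (ψf : EuclideanSpace ℂ (Fin 2 × Fin 2))
    (h00 : ψf (0, 0) = 1) (h11 : ψf (1, 1) = (ε : ℂ))
    (h01 : ψf (0, 1) = 0) (h10 : ψf (1, 0) = 0) :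
    (∑ i : Fin 2, ‖ψf (i, 0)‖ ^ 2) / ‖ψf‖ ^ 2 = 1 / (1 + ε ^ 2) ∧
      (∑ i : Fin 2, ‖ψf (i, 1)‖ ^ 2) / ‖ψf‖ ^ 2 = ε ^ 2 / (1 + ε ^ 2) :=
  manual_normalization_ftl_signalling_probabilities_general ε ψf h00 h11 h01 h10
end

section
/- Let V be a 2×2 unitary matrix over ℂ. In the two-qubit Hilbert space modeled as the Euclidean space of functions (Fin 2 × Fin 2) → ℂ, let ψ be the Bell state with components ψ(0,0) = ψ(1,1) = 1 and ψ(0,1) = ψ(1,0) = 0, and let ψ' be the state obtained by applying V to Alice's qubit: ψ'(i,j) = ∑_k V(i,k) · ψ(k,j). Then Bob's normalized measurement probabilities are unchanged: (∑_i |ψ'(i,0)|²) / ‖ψ'‖² = 1/2 and (∑_i |ψ'(i,1)|²) / ‖ψ'‖² = 1/2, the same as for ψ. In other words, a unitary operation on Alice's qubit alone cannot change Bob's measurement probabilities for the Bell state. -/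
open scoped Matrix

/-- Let `V` be a `2 × 2` unitary matrix, `ψ = |00⟩ + |11⟩`
the Bell state in `EuclideanSpace ℂ (Fin 2 × Fin 2)`, and `ψ'` the state
obtained by applying `V` to Alice's qubit (the first index). Then Bob's
normalized measurement probabilities remain `1/2` and `1/2`: a unitary
operation on Alice's qubit alone cannot change Bob's probabilities. -/
theorem no_communication_for_bell_state
    (V : Matrix (Fin 2) (Fin 2) ℂ) (hV : Vᴴ * V = 1 ∧ V * Vᴴ = 1)
    (ψ ψ' : EuclideanSpace ℂ (Fin 2 × Fin 2))
    (h00 : ψ (0, 0) = 1) (h11 : ψ (1, 1) = 1)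
    (h01 : ψ (0, 1) = 0) (h10 : ψ (1, 0) = 0)
    (hψ' : ∀ i j : Fin 2, ψ' (i, j) = ∑ k : Fin 2, V i k * ψ (k, j)) :
    (∑ i : Fin 2, ‖ψ' (i, 0)‖ ^ 2) / ‖ψ'‖ ^ 2 = 1 / 2 ∧
      (∑ i : Fin 2, ‖ψ' (i, 1)‖ ^ 2) / ‖ψ'‖ ^ 2 = 1 / 2 := by
  have hcol : ∀ k : Fin 2, ∑ i : Fin 2, ‖V i k‖ ^ 2 = 1 := by
    intro k
    have h := congrArg (fun M => (M k k).re) hV.1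
    simp only [Matrix.mul_apply, Matrix.conjTranspose_apply, Matrix.one_apply_eq,
      Complex.one_re] at h
    rw [← h, Complex.re_sum]
    refine Finset.sum_congr rfl fun i _ => ?_
    have : star (V i k) * V i k = (Complex.normSq (V i k) : ℂ) :=
      (Complex.normSq_eq_conj_mul_self).symm
    rw [this, Complex.ofReal_re, Complex.normSq_eq_norm_sq]
  have hval0 : ∀ i : Fin 2, ψ' (i, 0) = V i 0 := fun i => by
    rw [hψ' i 0, Fin.sum_univ_two, h00, h10]; ring
  have hval1 : ∀ i : Fin 2, ψ' (i, 1) = V i 1 := fun i => by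
    rw [hψ' i 1, Fin.sum_univ_two, h01, h11]; ring
  have hnorm : ‖ψ'‖ ^ 2 = 2 := by
    rw [EuclideanSpace.norm_eq ψ',
      Real.sq_sqrt (Finset.sum_nonneg fun x _ => sq_nonneg _), Fintype.sum_prod_type]
    have h0 := hcol 0
    have h1 := hcol 1
    simp only [Fin.sum_univ_two, hval0, hval1] at *
    linarith
  constructor
  · simp only [hval0, hcol, hnorm]
  · simp only [hval1, hcol, hnorm]
end
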